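/- Let d be the feed vertex (last vertex) of some median order of a tournament T, and let I be a module of T containing d. Then for every vertex v ∈ I, |N⁺(v) \ I| ≤ |N⁺⁺(v) \ I|. -/

import Mathlib

variable {V : Type*}

/-- An oriented graph: no loops or 2-cycles (asymmetric relation). -/
def Oriented (E : V → V → Prop) : Prop := ∀ u v : V, E u v → ¬ E v u

/-- A tournament: oriented and any two distinct vertices are joined by an arc. -/
def Tournament (E : V → V → Prop) : Prop :=
  Oriented E ∧ ∀ u v : V, u ≠ v → E u v ∨ E v u

def outN (E : V → V → Prop) (v : V) : Set V := {u | E v u}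

def inN (E : V → V → Prop) (v : V) : Set V := {u | E u v}

/-- The second out-neighborhood: vertices at directed distance exactly 2. -/
def secondN (E : V → V → Prop) (v : V) : Set V :=
  {u | ¬ E v u ∧ u ≠ v ∧ ∃ w, E v w ∧ E w u}

/-- `u` and `v` are distinct non-adjacent vertices (a missing edge). -/
def NonAdj (E : V → V → Prop) (u v : V) : Prop := u ≠ v ∧ ¬ E u v ∧ ¬ E v u

/-- The missing edges form a matching: every vertex has at most one non-neighbor. -/
def MissingMatching (E : V → V → Prop) : Prop :=
  ∀ u v w : V, NonAdj E u v → NonAdj E u w → v = w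

/-- A special arc `x ↠ y`: an arc such that `x` is not in the second
out-neighborhood of `y`. -/
def SpecialArc (E : V → V → Prop) (x y : V) : Prop :=
  E x y ∧ ¬ ∃ u, E y u ∧ E u x

/-- Number of forward arcs of an ordering (list) of the vertices. -/
noncomputable def fwd (E : V → V → Prop) (L : List V) : ℕ :=
  Set.ncard {p : ℕ × ℕ | p.1 < p.2 ∧ ∃ (h1 : p.1 < L.length) (h2 : p.2 < L.length),
    E (L.get ⟨p.1, h1⟩) (L.get ⟨p.2, h2⟩)}

/-- A median order: an enumeration of all vertices maximizing the number of
forward arcs. -/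
def MedianOrder (E : V → V → Prop) (L : List V) : Prop :=
  L.Nodup ∧ (∀ v : V, v ∈ L) ∧
    ∀ M : List V, M.Nodup → (∀ v : V, v ∈ M) → fwd E M ≤ fwd E L

/-- A module: any two vertices inside have the same in- and out-neighborhoods
outside. -/
def IsModule (E : V → V → Prop) (I : Set V) : Prop :=
  ∀ u ∈ I, ∀ v ∈ I, ∀ w, w ∉ I → (E u w ↔ E v w) ∧ (E w u ↔ E w v)

/-- 2-degeneracy of the underlying undirected graph. -/
def TwoDegenerate (E : V → V → Prop) : Prop :=
  ∀ S : Set V, S.Nonempty → ∃ v ∈ S, Set.ncard {u | u ∈ S ∧ u ≠ v ∧ (E u v ∨ E v u)} ≤ 2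

/-- The relation `(a,b) R (c,d)`: the 4-cycle `a → c ↠ b → d ↠ a`. -/
def Rrel (E : V → V → Prop) (a b c d : V) : Prop :=
  E a c ∧ SpecialArc E c b ∧ E b d ∧ SpecialArc E d a

/-!
By the module property, `N⁺(v) \ I` and `N⁺⁺(v) \ I` do not depend on `v ∈ I`, so it suffices to
treat the feed vertex `d`. Call a vertex a barrier if it lies in `I` or cannot be reached from `d`
in one or two steps, and cut the median order after each barrier. For a block `A` of non-barriers
followed by a barrier `v`, moving `v` in front of `A` loses no forward arcs, so `v` beats at most as
many vertices of `A` as beat it. But `v` beats every out-neighbour of `d` outside `I`, and every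
vertex of `A` beating `v` lies in `N⁺⁺(d) \ I`. Suffixes of median orders are median orders, so
summing over the blocks gives the bound.
-/

open scoped Classical

lemma List.countP_eq_sum_range (p : V → Prop) (M : List V) :
    M.countP (p ·) = ∑ j ∈ Finset.range M.length, if ∃ b, M[j]? = some b ∧ p b then 1 else 0 := by
  induction M with
  | nil => simp
  | cons a M ih =>
    rw [List.countP_cons, List.length_cons, Finset.sum_range_succ', ih]
    simp

lemma List.ncard_eq_countP {L : List V} (hnd : L.Nodup) (hall : ∀ v, v ∈ L) (S : Set V) :
    S.ncard = L.countP (· ∈ S) := by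
  have : S = ↑(L.filter (· ∈ S)).toFinset := by
    ext u
    simp [hall u]
  conv_lhs => rw [this]
  rw [Set.ncard_coe_finset, List.toFinset_card_of_nodup (hnd.filter _),
    List.countP_eq_length_filter]

section ForwardArcs

variable (E : V → V → Prop)

lemma fwd_eq_sum (L : List V) :
    fwd E L = ∑ i ∈ Finset.range L.length, ∑ j ∈ Finset.range L.length,
      if i < j ∧ ∃ a b, L[i]? = some a ∧ L[j]? = some b ∧ E a b then 1 else 0 := by
  rw [fwd, ← Finset.sum_product', ← Finset.card_filter, ← Set.ncard_coe_finset]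
  congr 1
  ext ⟨i, j⟩
  simp only [Set.mem_ofPred_eq, Finset.coe_filter, Finset.mem_product, Finset.mem_range]
  constructor
  · rintro ⟨hij, h1, h2, h⟩
    exact ⟨⟨h1, h2⟩, hij, _, _, List.getElem?_eq_getElem h1, List.getElem?_eq_getElem h2, h⟩
  · rintro ⟨⟨h1, h2⟩, hij, a, b, ha, hb, h⟩
    simp only [List.getElem?_eq_getElem h1, List.getElem?_eq_getElem h2, Option.some.injEq] at ha hb
    subst ha hb
    exact ⟨hij, h1, h2, h⟩

lemma fwd_cons (x : V) (M : List V) : fwd E (x :: M) = M.countP (E x ·) + fwd E M := by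
  simp only [fwd_eq_sum, List.length_cons, Finset.sum_range_succ', List.countP_eq_sum_range,
    List.getElem?_cons_succ, List.getElem?_cons_zero]
  simp [add_comm]

lemma fwd_append_cons_add_countP (v : V) (A B : List V) :
    fwd E (A ++ v :: B) + A.countP (E v ·) = fwd E (v :: (A ++ B)) + A.countP (E · v) := by
  induction A with
  | nil => simp
  | cons a A ih =>
    simp only [List.cons_append, fwd_cons, List.countP_cons, List.countP_append] at ih ⊢
    omega

def FwdMaximal (L : List V) : Prop := ∀ M : List V, M.Perm L → fwd E M ≤ fwd E L

variable {E}

lemma MedianOrder.fwdMaximal {L : List V} (h : MedianOrder E L) : FwdMaximal E L :=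
  fun M hM => h.2.2 M (hM.nodup_iff.mpr h.1) fun v => hM.mem_iff.mpr (h.2.1 v)

lemma FwdMaximal.of_cons {x : V} {L : List V} (h : FwdMaximal E (x :: L)) : FwdMaximal E L := by
  intro M hM
  have := h (x :: M) (hM.cons x)
  rw [fwd_cons, fwd_cons, hM.countP_eq] at this
  omega

lemma FwdMaximal.of_append_right {A B : List V} (h : FwdMaximal E (A ++ B)) : FwdMaximal E B := by
  induction A with
  | nil => exact h
  | cons a A ih => exact ih h.of_cons

lemma FwdMaximal.countP_out_le_countP_in {v : V} {A B : List V} (h : FwdMaximal E (A ++ v :: B)) :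
    A.countP (E v ·) ≤ A.countP (E · v) := by
  have := h _ List.perm_middle.symm
  have := fwd_append_cons_add_countP E v A B
  omega

end ForwardArcs

section Barrier

variable {E : V → V → Prop} {I : Set V}

lemma IsModule.outN_diff_eq (hI : IsModule E I) {u v : V} (hu : u ∈ I) (hv : v ∈ I) :
    outN E u \ I = outN E v \ I := by
  ext x
  exact and_congr_left fun hx => (hI u hu v hv x hx).1

lemma IsModule.secondN_diff_subset (hI : IsModule E I) {u v : V} (hu : u ∈ I) (hv : v ∈ I) :
    secondN E u \ I ⊆ secondN E v \ I := by
  rintro x ⟨⟨hux, -, w, huw, hwx⟩, hx⟩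
  -- a middle vertex inside `I` would give `u → x` by the module property
  have hw : w ∉ I := fun hw => hux ((hI w hw u hu x hx).1.mp hwx)
  refine ⟨⟨fun hvx => hux ((hI u hu v hv x hx).1.mpr hvx), fun h => hx (h ▸ hv), w,
    (hI u hu v hv w hw).1.mp huw, hwx⟩, hx⟩

lemma IsModule.secondN_diff_eq (hI : IsModule E I) {u v : V} (hu : u ∈ I) (hv : v ∈ I) :
    secondN E u \ I = secondN E v \ I :=
  (hI.secondN_diff_subset hu hv).antisymm (hI.secondN_diff_subset hv hu)

variable (E I) in
def IsBarrier (d u : V) : Prop := u ∈ I ∨ (¬ E d u ∧ ∀ w, E d w → ¬ E w u)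

variable {d : V}

lemma IsBarrier.rel_of_mem_outN (hT : Tournament E) (hI : IsModule E I) (hd : d ∈ I) {u v : V}
    (hv : IsBarrier E I d v) (hu : u ∈ outN E d \ I) : E v u := by
  obtain ⟨hdu, hu⟩ := hu
  rcases hv with hv | ⟨hdv, hv⟩
  · exact (hI d hd v hv u hu).1.mp hdu
  · have hne : u ≠ v := by rintro rfl; exact hdv hdu
    exact (hT.2 u v hne).resolve_left (hv u hdu)

lemma IsBarrier.mem_secondN_of_rel (hE : Oriented E) (hI : IsModule E I) (hd : d ∈ I) {u v : V}
    (hv : IsBarrier E I d v) (hu : ¬ IsBarrier E I d u) (huv : E u v) : u ∈ secondN E d \ I := by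
  simp only [IsBarrier, not_or, not_and, not_forall, not_not] at hu
  obtain ⟨hu, hreach⟩ := hu
  have hdu : ¬ E d u := by
    rcases hv with hv | ⟨-, hv⟩
    · exact hE u d ((hI d hd v hv u hu).2.mpr huv)
    · exact fun hdu => hv u hdu huv
  obtain ⟨w, hdw, hwu⟩ := hreach hdu
  exact ⟨⟨hdu, fun h => hu (h ▸ hd), w, hdw, hwu⟩, hu⟩

lemma FwdMaximal.countP_outN_le_of_isBarrier (hT : Tournament E) (hI : IsModule E I) (hd : d ∈ I)
    {v : V} {A B : List V} (hmax : FwdMaximal E (A ++ v :: B))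
    (hA : ∀ u ∈ A, ¬ IsBarrier E I d u) (hv : IsBarrier E I d v) :
    A.countP (· ∈ outN E d \ I) ≤ A.countP (· ∈ secondN E d \ I) :=
  calc A.countP (· ∈ outN E d \ I)
      ≤ A.countP (E v ·) := List.countP_mono_left fun u _ hu => by
        simpa using hv.rel_of_mem_outN hT hI hd (by simpa using hu)
    _ ≤ A.countP (E · v) := hmax.countP_out_le_countP_in
    _ ≤ A.countP (· ∈ secondN E d \ I) := List.countP_mono_left fun u hu huv => by
        simpa using hv.mem_secondN_of_rel hT.1 hI hd (hA u hu) (by simpa using huv)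

lemma FwdMaximal.countP_outN_le (hT : Tournament E) (hI : IsModule E I) (hd : d ∈ I)
    {L : List V} (hmax : FwdMaximal E (L ++ [d])) :
    L.countP (· ∈ outN E d \ I) ≤ L.countP (· ∈ secondN E d \ I) := by
  induction hn : L.length using Nat.strong_induction_on generalizing L with
  | _ n ih =>
  cases hfind : L.find? (IsBarrier E I d ·) with
  | none =>
    refine hmax.countP_outN_le_of_isBarrier hT hI hd (fun u hu => ?_) (Or.inl hd)
    simpa using List.find?_eq_none.mp hfind u hu
  | some v =>
    obtain ⟨hv, A, B, rfl, hA⟩ := List.find?_eq_some_iff_append.mp hfind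
    simp only [decide_eq_true_eq, Bool.not_eq_true', decide_eq_false_iff_not] at hv hA
    rw [List.append_assoc, List.cons_append] at hmax
    have hAv := hmax.countP_outN_le_of_isBarrier hT hI hd hA hv
    have hB := ih B.length (by simp [← hn]; omega) hmax.of_append_right.of_cons rfl
    have hvout : v ∉ outN E d \ I := fun ⟨hdv, hvI⟩ => hv.elim hvI fun h => h.1 hdv
    simp only [List.countP_append, List.countP_cons, hvout, decide_false, Bool.false_eq_true,
      if_false]
    omega

end Barrier

theorem stmt19_general (E : V → V → Prop) (hT : Tournament E)
    (L : List V) (hL : MedianOrder E L) (hne : L ≠ [])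
    (I : Set V) (hI : IsModule E I) (hd : L.getLast hne ∈ I) :
    ∀ v ∈ I, Set.ncard (outN E v \ I) ≤ Set.ncard (secondN E v \ I) := by
  intro v hv
  obtain ⟨L₀, d, rfl⟩ : ∃ L₀ d, L = L₀ ++ [d] := ⟨_, _, (List.dropLast_append_getLast hne).symm⟩
  rw [List.getLast_append_singleton] at hd
  rw [hI.outN_diff_eq hv hd, hI.secondN_diff_eq hv hd, List.ncard_eq_countP hL.1 hL.2.1,
    List.ncard_eq_countP hL.1 hL.2.1, List.countP_append, List.countP_append]
  simpa [hd] using hL.fwdMaximal.countP_outN_le hT hI hd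

theorem stmt19 [Fintype V] (E : V → V → Prop) (hT : Tournament E)
    (L : List V) (hL : MedianOrder E L) (hne : L ≠ [])
    (I : Set V) (hI : IsModule E I) (hd : L.getLast hne ∈ I) :
    ∀ v ∈ I, Set.ncard (outN E v \ I) ≤ Set.ncard (secondN E v \ I) :=
  stmt19_general E hT L hL hne I hI hd
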